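/- arXiv:1304.1169 — 6 statements merged into one kernel-verified Lean document; each statement's English description precedes it below -/
import Mathlib

section
/- In the free noncommutative polynomial ring Z⟨a,b⟩, with c = a + b and d = ab + ba, for every natural number k one has (a−b)^(2k+1)·b + (b−a)^(2k+1)·a = −(c² − 2d)^(k+1). -/
/-! Since `c² - 2d = (a - b)²` and `(b - a)ⁿ = -(a - b)ⁿ` for odd `n`, the left-hand side
collapses to `(a - b)²ᵏ⁺¹ (b - a) = -(a - b)²ᵏ⁺²`. -/

section Ring

variable {R : Type*} [Ring R]

theorem add_sq_sub_two_mul_add_mul_comm (a b : R) :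
    (a + b) ^ 2 - 2 * (a * b + b * a) = (a - b) ^ 2 := by
  noncomm_ring

theorem sub_pow_mul_add_sub_pow_mul_of_odd {n : ℕ} (hn : Odd n) (a b : R) :
    (a - b) ^ n * b + (b - a) ^ n * a = -(a - b) ^ (n + 1) := by
  rw [← neg_sub a b, hn.neg_pow, pow_succ]
  noncomm_ring

end Ring

theorem ab_odd_power_b_plus_ba_odd_power_a (k : ℕ) :
    let a : FreeAlgebra ℤ (Fin 2) := FreeAlgebra.ι ℤ 0
    let b : FreeAlgebra ℤ (Fin 2) := FreeAlgebra.ι ℤ 1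
    let c := a + b
    let d := a * b + b * a
    (a - b) ^ (2 * k + 1) * b + (b - a) ^ (2 * k + 1) * a = -(c ^ 2 - 2 * d) ^ (k + 1) := by
  intro a b c d
  rw [add_sq_sub_two_mul_add_mul_comm, ← pow_mul, mul_add, mul_one]
  exact sub_pow_mul_add_sub_pow_mul_of_odd (odd_two_mul_add_one k) a b
end

section
/- For any integer polynomial p(x), the element p(a−b)·b + p(b−a)·a of Z⟨a,b⟩ lies in the subring generated by c = a+b and d = ab+ba. -/
/-!
Since `(b - a)² = (a - b)² = (a + b)² - 2(ab + ba)` lies in the subring, multiplying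
`(a - b)ⁿ b + (b - a)ⁿ a` on the left by `(a - b)²` raises `n` by two; so the claim for monomials
follows by two-step induction from `n = 0` (`a + b`) and `n = 1` (`2(ab + ba) - (a + b)²`), and
for all polynomials by additivity in `p`.
-/

open Polynomial

namespace Subring

variable {R : Type*} [Ring R] (a b : R)

theorem add_mem_closure_add_mul : a + b ∈ closure {a + b, a * b + b * a} :=
  subset_closure (Set.mem_insert _ _)

theorem mul_add_mul_mem_closure_add : a * b + b * a ∈ closure {a + b, a * b + b * a} :=
  subset_closure (Set.mem_insert_of_mem _ rfl)

theorem sub_sq_mem_closure_add_mul : (a - b) ^ 2 ∈ closure {a + b, a * b + b * a} := by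
  have hsq : (a - b) ^ 2 = (a + b) * (a + b) - 2 * (a * b + b * a) := by noncomm_ring
  rw [hsq, two_mul]
  have hd := mul_add_mul_mem_closure_add a b
  exact sub_mem (mul_mem (add_mem_closure_add_mul a b) (add_mem_closure_add_mul a b))
    (add_mem hd hd)

theorem sub_pow_mul_add_sub_pow_mul_mem_closure (n : ℕ) :
    (a - b) ^ n * b + (b - a) ^ n * a ∈ closure {a + b, a * b + b * a} := by
  induction n using Nat.twoStepInduction with
  | zero => simpa [add_comm b a] using add_mem_closure_add_mul a b
  | one =>
    have h : (a - b) ^ 1 * b + (b - a) ^ 1 * a = 2 * (a * b + b * a) - (a + b) * (a + b) := by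
      noncomm_ring
    rw [h, two_mul]
    have hd := mul_add_mul_mem_closure_add a b
    exact sub_mem (add_mem hd hd)
      (mul_mem (add_mem_closure_add_mul a b) (add_mem_closure_add_mul a b))
  | more n ih _ =>
    have h : (a - b) ^ (n + 2) * b + (b - a) ^ (n + 2) * a
        = (a - b) ^ 2 * ((a - b) ^ n * b + (b - a) ^ n * a) := by
      have hba : (b - a) ^ 2 = (a - b) ^ 2 := by noncomm_ring
      rw [add_comm n 2, pow_add, pow_add, hba, mul_add, mul_assoc, mul_assoc]
    rw [h]
    exact mul_mem (sub_sq_mem_closure_add_mul a b) ih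

theorem aeval_sub_mul_add_aeval_sub_mul_mem_closure (p : ℤ[X]) :
    aeval (a - b) p * b + aeval (b - a) p * a ∈ closure {a + b, a * b + b * a} := by
  induction p using Polynomial.induction_on' with
  | add p q hp hq =>
    rw [map_add, map_add, add_mul, add_mul, add_add_add_comm]
    exact add_mem hp hq
  | monomial n r =>
    simp only [aeval_monomial, algebraMap_int_eq, eq_intCast, mul_assoc, ← mul_add]
    exact mul_mem (intCast_mem _ r) (sub_pow_mul_add_sub_pow_mul_mem_closure a b n)

end Subring

theorem lemma_Stanley_ii (p : Polynomial ℤ) :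
    let a : FreeAlgebra ℤ (Fin 2) := FreeAlgebra.ι ℤ 0
    let b : FreeAlgebra ℤ (Fin 2) := FreeAlgebra.ι ℤ 1
    Polynomial.aeval (a - b) p * b + Polynomial.aeval (b - a) p * a ∈
      Subring.closure {a + b, a * b + b * a} :=
  Subring.aeval_sub_mul_add_aeval_sub_mul_mem_closure _ _ p
end

section
/- Let R be a commutative ring and S a subring of R. Inside the free associative R-algebra R⟨a,b⟩, the intersection of the subalgebra R⟨c,d⟩ (generated over R by c = a+b and d = ab+ba) with the subring S⟨a,b⟩ (S-linear combinations of words in a,b) equals S⟨c,d⟩ (S-linear combinations of words in c,d). In other words, if a cd-polynomial with coefficients in R has all its ab-expansion coefficients in S, then its cd-coefficients already lie in S. -/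
/-!
Let `∂_a, ∂_b` be the left derivatives of `R⟨a,b⟩`: `∂_x (x w) = w` and `∂_x (y w) = 0` for
`y ≠ x`. They only reindex coefficients, so they preserve `S⟨a,b⟩`. Write an element of
`R⟨c,d⟩` as `f = r + c F₀ + d F₁` with `F₀, F₁ ∈ R⟨c,d⟩` of lower degree. Then
`∂_a f = F₀ + b F₁` and `∂_b f = F₀ + a F₁`, hence `F₁ = ∂_a ∂_b f - ∂_a ∂_a f` and
`F₀ = ∂_a f - b F₁`. So if `f` has coefficients in `S`, so do `r`, `F₀` and `F₁`, and induction
on the degree puts `f` in `S⟨c,d⟩`.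
-/

namespace MonoidAlgebra

variable {R : Type*}

section coeffSubring

variable [Ring R] (S : Subring R) (G : Type*) [Monoid G]

def coeffSubring : Subring R[G] where
  carrier := {f | ∀ g, f.coeff g ∈ S}
  zero_mem' _ := S.zero_mem
  one_mem' g := by
    classical
    rw [one_def, coeff_single, Finsupp.single_apply]
    split_ifs
    exacts [S.one_mem, S.zero_mem]
  add_mem' hf hh g := S.add_mem (hf g) (hh g)
  neg_mem' hf g := S.neg_mem (hf g)
  mul_mem' {f h} hf hh g := by
    classical
    rw [coeff_mul]
    refine sum_mem fun g₁ _ => sum_mem fun g₂ _ => ?_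
    dsimp only
    split_ifs
    exacts [S.mul_mem (hf g₁) (hh g₂), S.zero_mem]

variable {S G}

lemma mem_coeffSubring {f : R[G]} : f ∈ coeffSubring S G ↔ ∀ g, f.coeff g ∈ S := Iff.rfl

lemma single_mem_coeffSubring {g : G} {r : R} (hr : r ∈ S) : single g r ∈ coeffSubring S G := by
  classical
  refine mem_coeffSubring.mpr fun g' => ?_
  rw [coeff_single, Finsupp.single_apply]
  split_ifs
  exacts [hr, S.zero_mem]

end coeffSubring

section lderiv

variable [CommSemiring R] {α : Type*}

variable (R) in
noncomputable def lderiv (x : α) : R[FreeMonoid α] →ₗ[R] R[FreeMonoid α] :=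
  (coeffLinearEquiv R).symm.toLinearMap ∘ₗ
    Finsupp.lcomapDomain (FreeMonoid.of x * ·) (mul_right_injective _) ∘ₗ
    (coeffLinearEquiv R).toLinearMap

@[simp]
lemma coeff_lderiv (x : α) (f : R[FreeMonoid α]) (u : FreeMonoid α) :
    (lderiv R x f).coeff u = f.coeff (.of x * u) := rfl

@[simp]
lemma coeff_single_of_mul_one (y : α) (r : R) (f : R[FreeMonoid α]) :
    (single (FreeMonoid.of y) r * f).coeff 1 = 0 :=
  coeff_single_mul_of_forall_mul_ne _ _ fun u h => by
    simpa using congrArg FreeMonoid.length h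

lemma coeff_single_of_mul_of_mul [DecidableEq α] (x y : α) (r : R) (f : R[FreeMonoid α])
    (v : FreeMonoid α) :
    (single (FreeMonoid.of x) r * f).coeff (.of y * v) = if x = y then r * f.coeff v else 0 := by
  split_ifs with h
  · subst h; exact coeff_single_mul_mul ..
  · refine coeff_single_mul_of_forall_mul_ne _ _ fun w hw => h ?_
    have := congrArg FreeMonoid.toList hw
    simp only [FreeMonoid.toList_mul, FreeMonoid.toList_of, List.singleton_append,
      List.cons.injEq] at this
    exact this.1

lemma lderiv_single_of_mul [DecidableEq α] (x y : α) (f : R[FreeMonoid α]) :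
    lderiv R x (single (FreeMonoid.of y) 1 * f) = if y = x then f else 0 := by
  ext u
  rw [coeff_lderiv, coeff_single_of_mul_of_mul]
  split_ifs <;> simp

@[simp]
lemma lderiv_algebraMap (x : α) (r : R) : lderiv R x (algebraMap R R[FreeMonoid α] r) = 0 := by
  ext u
  simp [coe_algebraMap]

lemma eq_algebraMap_add_sum_single_mul_lderiv [Fintype α] (f : R[FreeMonoid α]) :
    f = algebraMap R _ (f.coeff 1) + ∑ x, single (FreeMonoid.of x) 1 * lderiv R x f := by
  classical
  ext u
  cases u with
  | one => simp [coe_algebraMap]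
  | of_mul y v => simp [coe_algebraMap, coeff_single_of_mul_of_mul]

lemma length_lt_of_mem_support_lderiv {n : ℕ} {f : R[FreeMonoid α]}
    (hf : ∀ u ∈ f.coeff.support, u.length < n + 1) (x : α) :
    ∀ u ∈ (lderiv R x f).coeff.support, u.length < n := by
  intro u hu
  have := hf _ (by simpa using hu)
  rw [FreeMonoid.length_mul, FreeMonoid.length_of] at this
  omega

lemma lderiv_mem_coeffSubring {R : Type*} [CommRing R] {S : Subring R} (x : α)
    {f : R[FreeMonoid α]} (hf : f ∈ coeffSubring S _) : lderiv R x f ∈ coeffSubring S _ :=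
  mem_coeffSubring.mpr fun _ => mem_coeffSubring.mp hf _

end lderiv

end MonoidAlgebra

lemma AlgEquiv.image_adjoin {R A B : Type*} [CommSemiring R] [Semiring A] [Semiring B]
    [Algebra R A] [Algebra R B] (e : A ≃ₐ[R] B) (s : Set A) :
    e '' Algebra.adjoin R s = Algebra.adjoin R (e '' s) := by
  simpa using congrArg SetLike.coe (AlgHom.map_adjoin e.toAlgHom s)

lemma RingEquivClass.image_subringClosure {A B F : Type*} [Ring A] [Ring B] [EquivLike F A B]
    [RingEquivClass F A B] (e : F) (s : Set A) :
    e '' Subring.closure s = Subring.closure (e '' s) := by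
  simpa using congrArg SetLike.coe (RingHom.map_closure (e : A →+* B) s)

namespace CDIndex

open MonoidAlgebra

section CommSemiring

variable (R : Type*) [CommSemiring R]

noncomputable def a : R[FreeMonoid (Fin 2)] := single (.of 0) 1
noncomputable def b : R[FreeMonoid (Fin 2)] := single (.of 1) 1
noncomputable def c : R[FreeMonoid (Fin 2)] := a R + b R
noncomputable def d : R[FreeMonoid (Fin 2)] := a R * b R + b R * a R

/-- The monoid algebra on two letters serves both as `R⟨c,d⟩` (letters `0, 1` read as `c, d`)
and as `R⟨a,b⟩`; `cdSubst` expands a cd-polynomial in `a, b`. -/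
noncomputable def cdSubst : R[FreeMonoid (Fin 2)] →ₐ[R] R[FreeMonoid (Fin 2)] :=
  lift R _ _ (FreeMonoid.lift ![c R, d R])

variable {R}

lemma cdSubst_single_of (x : Fin 2) : cdSubst R (single (.of x) 1) = ![c R, d R] x := by
  rw [cdSubst, lift_single, one_smul, FreeMonoid.lift_eval_of]

lemma cdSubst_eq (z : R[FreeMonoid (Fin 2)]) :
    cdSubst R z = algebraMap R _ (z.coeff 1) + c R * cdSubst R (lderiv R 0 z) +
      d R * cdSubst R (lderiv R 1 z) := by
  conv_lhs => rw [eq_algebraMap_add_sum_single_mul_lderiv z]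
  simp only [map_add, AlgHom.commutes, map_mul, Fin.sum_univ_two, cdSubst_single_of,
    Matrix.cons_val_zero, Matrix.cons_val_one, add_assoc]

@[simp] lemma lderiv_zero_a_mul (f : R[FreeMonoid (Fin 2)]) : lderiv R 0 (a R * f) = f := by
  simp [a, lderiv_single_of_mul]

@[simp] lemma lderiv_zero_b_mul (f : R[FreeMonoid (Fin 2)]) : lderiv R 0 (b R * f) = 0 := by
  simp [b, lderiv_single_of_mul]

@[simp] lemma lderiv_one_a_mul (f : R[FreeMonoid (Fin 2)]) : lderiv R 1 (a R * f) = 0 := by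
  simp [a, lderiv_single_of_mul]

@[simp] lemma lderiv_one_b_mul (f : R[FreeMonoid (Fin 2)]) : lderiv R 1 (b R * f) = f := by
  simp [b, lderiv_single_of_mul]

lemma lderiv_zero_cdSubst (z : R[FreeMonoid (Fin 2)]) :
    lderiv R 0 (cdSubst R z) = cdSubst R (lderiv R 0 z) + b R * cdSubst R (lderiv R 1 z) := by
  rw [cdSubst_eq]
  simp only [c, d, add_mul, mul_assoc, map_add, lderiv_algebraMap, lderiv_zero_a_mul,
    lderiv_zero_b_mul]
  abel

lemma lderiv_one_cdSubst (z : R[FreeMonoid (Fin 2)]) :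
    lderiv R 1 (cdSubst R z) = cdSubst R (lderiv R 0 z) + a R * cdSubst R (lderiv R 1 z) := by
  rw [cdSubst_eq]
  simp only [c, d, add_mul, mul_assoc, map_add, lderiv_algebraMap, lderiv_one_a_mul,
    lderiv_one_b_mul]
  abel

lemma coeff_one_cdSubst (z : R[FreeMonoid (Fin 2)]) : (cdSubst R z).coeff 1 = z.coeff 1 := by
  rw [cdSubst_eq]
  simp [c, d, a, b, add_mul, mul_assoc, coe_algebraMap]

end CommSemiring

variable {R : Type*} [CommRing R] (S : Subring R)

lemma cdSubst_lderiv_one (z : R[FreeMonoid (Fin 2)]) :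
    cdSubst R (lderiv R 1 z) =
      lderiv R 0 (lderiv R 1 (cdSubst R z)) - lderiv R 0 (lderiv R 0 (cdSubst R z)) := by
  simp [lderiv_zero_cdSubst, lderiv_one_cdSubst]

theorem cdSubst_mem_closure_of_mem_coeffSubring (z : R[FreeMonoid (Fin 2)])
    (hz : cdSubst R z ∈ coeffSubring S _) :
    cdSubst R z ∈ Subring.closure (algebraMap R _ '' S ∪ {c R, d R}) := by
  obtain ⟨n, hn⟩ : ∃ n, ∀ u ∈ z.coeff.support, u.length < n :=
    ⟨z.coeff.support.sup FreeMonoid.length + 1,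
      fun _ hu => Nat.lt_succ_of_le (Finset.le_sup hu)⟩
  induction n generalizing z with
  | zero =>
    obtain rfl : z = 0 := by ext u; simpa using hn u
    rw [map_zero]
    exact zero_mem _
  | succ n ih =>
    have hz₁ : cdSubst R (lderiv R 1 z) ∈ coeffSubring S _ := by
      rw [cdSubst_lderiv_one]
      exact sub_mem (lderiv_mem_coeffSubring _ (lderiv_mem_coeffSubring _ hz))
        (lderiv_mem_coeffSubring _ (lderiv_mem_coeffSubring _ hz))
    have hz₀ : cdSubst R (lderiv R 0 z) ∈ coeffSubring S _ := by
      rw [eq_sub_of_add_eq (lderiv_zero_cdSubst z).symm]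
      exact sub_mem (lderiv_mem_coeffSubring _ hz)
        (mul_mem (single_mem_coeffSubring S.one_mem) hz₁)
    have hconst : z.coeff 1 ∈ S := coeff_one_cdSubst z ▸ mem_coeffSubring.mp hz 1
    rw [cdSubst_eq]
    refine add_mem (add_mem (Subring.subset_closure (.inl ⟨_, hconst, rfl⟩)) ?_) ?_
    · exact mul_mem (Subring.subset_closure (.inr (.inl rfl)))
        (ih _ hz₀ (length_lt_of_mem_support_lderiv hn 0))
    · exact mul_mem (Subring.subset_closure (.inr (.inr rfl)))
        (ih _ hz₁ (length_lt_of_mem_support_lderiv hn 1))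

lemma adjoin_cd_le_range_cdSubst : Algebra.adjoin R {c R, d R} ≤ (cdSubst R).range := by
  refine Algebra.adjoin_le ?_
  rintro _ (rfl | rfl)
  exacts [⟨_, cdSubst_single_of 0⟩, ⟨_, cdSubst_single_of 1⟩]

lemma closure_ab_le_coeffSubring :
    Subring.closure (algebraMap R _ '' S ∪ {a R, b R}) ≤ coeffSubring S _ := by
  rw [Subring.closure_le]
  rintro _ (⟨r, hr, rfl⟩ | rfl | rfl)
  exacts [single_mem_coeffSubring hr, single_mem_coeffSubring S.one_mem,
    single_mem_coeffSubring S.one_mem]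

lemma closure_cd_le_closure_ab : Subring.closure (algebraMap R _ '' S ∪ {c R, d R}) ≤
    Subring.closure (algebraMap R _ '' S ∪ {a R, b R}) := by
  have ha : a R ∈ Subring.closure (algebraMap R _ '' S ∪ {a R, b R}) :=
    Subring.subset_closure (.inr (.inl rfl))
  have hb : b R ∈ Subring.closure (algebraMap R _ '' S ∪ {a R, b R}) :=
    Subring.subset_closure (.inr (.inr rfl))
  rw [Subring.closure_le]
  rintro _ (hS | rfl | rfl)
  exacts [Subring.subset_closure (.inl hS), add_mem ha hb, add_mem (mul_mem ha hb) (mul_mem hb ha)]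

lemma closure_cd_le_adjoin : Subring.closure (algebraMap R _ '' S ∪ {c R, d R}) ≤
    (Algebra.adjoin R {c R, d R}).toSubring := by
  rw [Subring.closure_le]
  rintro _ (⟨r, -, rfl⟩ | h)
  exacts [Subalgebra.algebraMap_mem _ r, Algebra.subset_adjoin h]

theorem adjoin_inter_closure_eq :
    (Algebra.adjoin R {c R, d R} : Set R[FreeMonoid (Fin 2)]) ∩
        Subring.closure (algebraMap R _ '' S ∪ {a R, b R}) =
      Subring.closure (algebraMap R _ '' S ∪ {c R, d R}) := by
  ext f
  refine ⟨fun ⟨hcd, hab⟩ => ?_,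
    fun h => ⟨closure_cd_le_adjoin S h, closure_cd_le_closure_ab S h⟩⟩
  obtain ⟨z, rfl⟩ := adjoin_cd_le_range_cdSubst hcd
  exact cdSubst_mem_closure_of_mem_coeffSubring S z (closure_ab_le_coeffSubring S hab)

end CDIndex

/-- Lemma 3.4: `R⟨c,d⟩ ∩ S⟨a,b⟩ = S⟨c,d⟩` inside the free associative `R`-algebra on
two generators, where `S⟨a,b⟩` (resp. `S⟨c,d⟩`) is the subring of `S`-linear combinations
of words in `a, b` (resp. in `c, d`), realized as the subring generated by the scalars
coming from `S` together with the indicated elements. -/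
theorem cd_coefficients_in_subring (R : Type*) [CommRing R] (S : Subring R) :
    let A := FreeAlgebra R (Fin 2)
    let a : A := FreeAlgebra.ι R 0
    let b : A := FreeAlgebra.ι R 1
    let c := a + b
    let d := a * b + b * a
    (↑(Algebra.adjoin R ({c, d} : Set A)) : Set A) ∩
        ↑(Subring.closure ((algebraMap R A '' (S : Set R)) ∪ {a, b})) =
      ↑(Subring.closure ((algebraMap R A '' (S : Set R)) ∪ {c, d})) := by
  intro A a b c d
  let ψ : A ≃ₐ[R] MonoidAlgebra R (FreeMonoid (Fin 2)) :=
    FreeAlgebra.equivMonoidAlgebraFreeMonoid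
  have hψa : ψ a = CDIndex.a R := FreeAlgebra.lift_ι_apply _ _
  have hψb : ψ b = CDIndex.b R := FreeAlgebra.lift_ι_apply _ _
  apply Set.image_injective.mpr ψ.injective
  simp only [Set.image_inter ψ.injective, AlgEquiv.image_adjoin,
    RingEquivClass.image_subringClosure, Set.image_union, Set.image_insert_eq, Set.image_singleton,
    Set.image_image, AlgEquiv.commutes, c, d, map_add, map_mul, hψa, hψb]
  exact CDIndex.adjoin_inter_closure_eq S
end

section
/- Define the coproduct Δ on Z⟨a,b⟩ by Δ(u₁u₂⋯uₙ) = Σ_{i=1}^{n} u₁⋯u_{i−1} ⊗ u_{i+1}⋯uₙ for ab-monomials (each uᵢ ∈ {a,b}), extended linearly. Then Δ satisfies the Newtonian condition: Δ(v·w) = Σ v·w₍₁₎ ⊗ w₍₂₎ + Σ v₍₁₎ ⊗ v₍₂₎·w for all v, w in Z⟨a,b⟩, where Sweedler notation Δ(u) = Σ u₍₁₎ ⊗ u₍₂₎ is used. -/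
open scoped TensorProduct

noncomputable section

/-- `Z⟨a,b⟩`, the free associative `ℤ`-algebra on two noncommuting generators,
realized as the monoid algebra of the free monoid on two letters (letter `0` is `a`,
letter `1` is `b`). -/
abbrev FA := MonoidAlgebra ℤ (FreeMonoid (Fin 2))

def ofW (w : FreeMonoid (Fin 2)) : FA := MonoidAlgebra.of ℤ (FreeMonoid (Fin 2)) w

/-- The letter-deleting coproduct on a word: delete one letter and split there. -/
def deltaWord (w : FreeMonoid (Fin 2)) : FA ⊗[ℤ] FA :=
  ∑ i ∈ Finset.range w.length,
    ofW (FreeMonoid.ofList (w.toList.take i)) ⊗ₜ[ℤ]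
      ofW (FreeMonoid.ofList (w.toList.drop (i + 1)))

/-- The coproduct `Δ` on `Z⟨a,b⟩`, extended linearly from words. -/
def Delta : FA →ₗ[ℤ] FA ⊗[ℤ] FA :=
  Finsupp.lsum ℤ (fun w => LinearMap.toSpanSingleton ℤ _ (deltaWord w)) ∘ₗ
    (MonoidAlgebra.coeffLinearEquiv ℤ).toLinearMap

/-! Both sides of the identity are bilinear in `(v, w)`, so it suffices to check it on words
`x`, `y`. A letter deleted from `x * y` lies either in `y`, giving a term of `x · Δ y`, or in `x`,
giving a term of `Δ x · y`: splitting the sum over positions at `x.length` shows exactly this. -/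

open LinearMap (mulLeft mulRight)

def IsNewtonian {R A : Type*} [CommSemiring R] [Semiring A] [Algebra R A]
    (D : A →ₗ[R] A ⊗[R] A) : Prop :=
  ∀ v w, D (v * w) =
    TensorProduct.map (mulLeft R v) LinearMap.id (D w) +
      TensorProduct.map LinearMap.id (mulRight R w) (D v)

theorem MonoidAlgebra.isNewtonian_of_forall_of {k G : Type*} [CommSemiring k] [Monoid G]
    (D : MonoidAlgebra k G →ₗ[k] MonoidAlgebra k G ⊗[k] MonoidAlgebra k G)
    (h : ∀ a b : G, D (of k G a * of k G b) =
      TensorProduct.map (mulLeft k (of k G a)) LinearMap.id (D (of k G b)) +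
        TensorProduct.map LinearMap.id (mulRight k (of k G b)) (D (of k G a))) :
    IsNewtonian D := by
  -- the two sides of the Newtonian identity, as bilinear maps in `(v, w)`
  have key : (LinearMap.mul k (MonoidAlgebra k G)).compr₂ D =
      (LinearMap.rTensorHom _ ∘ₗ LinearMap.mul k _).compl₂ D +
        ((LinearMap.lTensorHom _ ∘ₗ (LinearMap.mul k _).flip).compl₂ D).flip :=
    LinearMap.ext_basis (basis G k) (basis G k) fun a b => h a b
  exact fun v w => congr($key v w)

lemma ofW_mul (u v : FreeMonoid (Fin 2)) : ofW (u * v) = ofW u * ofW v :=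
  map_mul (MonoidAlgebra.of ℤ (FreeMonoid (Fin 2))) u v

lemma Delta_ofW (u : FreeMonoid (Fin 2)) : Delta (ofW u) = deltaWord u := by
  simp [Delta, ofW]

lemma deltaWord_mul (u v : FreeMonoid (Fin 2)) :
    deltaWord (u * v) =
      TensorProduct.map (mulLeft ℤ (ofW u)) LinearMap.id (deltaWord v) +
        TensorProduct.map LinearMap.id (mulRight ℤ (ofW v)) (deltaWord u) := by
  rw [deltaWord, FreeMonoid.length_mul, Finset.sum_range_add, add_comm, deltaWord, deltaWord,
    map_sum, map_sum]
  congr 1 <;> refine Finset.sum_congr rfl fun i hi => ?_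
  · rw [FreeMonoid.toList_mul, FreeMonoid.length, List.take_length_add_append, add_assoc,
      List.drop_length_add_append, FreeMonoid.ofList_append, ofW_mul]
    rfl
  · have hi : i + 1 ≤ u.toList.length := Finset.mem_range.mp hi
    rw [FreeMonoid.toList_mul, List.take_append_of_le_length (by omega),
      List.drop_append_of_le_length hi, FreeMonoid.ofList_append, ofW_mul]
    rfl

/-- The Newtonian condition:
`Δ(v·w) = Σ v·w₍₁₎ ⊗ w₍₂₎ + Σ v₍₁₎ ⊗ v₍₂₎·w`. -/
theorem Delta_Newtonian (v w : FA) :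
    Delta (v * w) =
      TensorProduct.map (LinearMap.mulLeft ℤ v) LinearMap.id (Delta w) +
        TensorProduct.map LinearMap.id (LinearMap.mulRight ℤ w) (Delta v) := by
  refine MonoidAlgebra.isNewtonian_of_forall_of Delta (fun a b => ?_) v w
  have h := deltaWord_mul a b
  rwa [← Delta_ofW, ← Delta_ofW, ← Delta_ofW, ofW_mul] at h

end
end

section
/- Let G be a labeled acyclic locally finite digraph in which, for every interval, the total number of rising paths equals the total number of falling paths. Then Σ_{p rising} (−1)^{ℓ(p)} = Σ_{p falling} (−1)^{ℓ(p)}, where both sums range over rising (respectively falling) paths from the source 0̂ to the sink 1̂ and ℓ(p) is the length of p. -/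
/-- A labeled digraph: vertices, (multi-)edges with tail, head and labels in a set
`Λ` carrying a relation `rel`. -/
structure LDigraph where
  V : Type
  E : Type
  Λ : Type
  tail : E → V
  head : E → V
  lab : E → Λ
  rel : Λ → Λ → Prop

namespace LDigraph

variable (G : LDigraph)

/-- `IsPath x p y`: `p` is a directed path from `x` to `y` (the empty path requires `x = y`). -/
def IsPath : G.V → List G.E → G.V → Prop
  | x, [], y => x = y
  | x, e :: p, y => G.tail e = x ∧ IsPath (G.head e) p y

/-- `x ≤ y`: there is a directed path from `x` to `y`. -/
def Reaches (x y : G.V) : Prop := ∃ p, G.IsPath x p y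

/-- `x < y` in the order induced by directed paths. -/
def Lt (x y : G.V) : Prop := G.Reaches x y ∧ x ≠ y

/-- The digraph has no (nonempty) directed cycles. -/
def Acyclic : Prop := ∀ (x : G.V) (p : List G.E), p ≠ [] → ¬ G.IsPath x p x

/-- There are finitely many directed paths between any two vertices. -/
def LocallyFinite : Prop := ∀ x y : G.V, {p | G.IsPath x p y}.Finite

/-- A rising path: any two consecutive edge labels are related. -/
def Rising (p : List G.E) : Prop := List.Chain' (fun e f => G.rel (G.lab e) (G.lab f)) p

/-- A falling path: no two consecutive edge labels are related. -/
def Falling (p : List G.E) : Prop := List.Chain' (fun e f => ¬ G.rel (G.lab e) (G.lab f)) p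

open Classical in
/-- The descent word `u(p)` of a path, as an `ab`-monomial in
`Z⟨a,b⟩ = MonoidAlgebra ℤ (FreeMonoid (Fin 2))`; the letter `0` is `a` (ascent) and the
letter `1` is `b` (descent). -/
noncomputable def word (p : List G.E) : MonoidAlgebra ℤ (FreeMonoid (Fin 2)) :=
  MonoidAlgebra.of ℤ (FreeMonoid (Fin 2)) (FreeMonoid.ofList
    ((p.zip p.tail).map fun q => if G.rel (G.lab q.1) (G.lab q.2) then (0 : Fin 2) else 1))

/-- The `ab`-index `Ψ([x,y]) = Σ_p u(p)`, summing descent words over all directed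
paths from `x` to `y`. -/
noncomputable def Psi (x y : G.V) : MonoidAlgebra ℤ (FreeMonoid (Fin 2)) :=
  ∑ᶠ (p : List G.E) (_ : G.IsPath x p y), G.word p

end LDigraph

namespace LDigraph

/-- `G` is bounded with source `bot` and sink `top`. -/
def IsBounded (G : LDigraph) (bot top : G.V) : Prop :=
  (∀ v, G.Reaches bot v) ∧ ∀ v, G.Reaches v top

end LDigraph

/-!
Write `C r` for the matrix counting the `r`-chain paths between two vertices (the empty path
included) and `S r` for the matrix of signed counts `∑ (-1)^ℓ(p)` over `r`-chain paths.
Splitting a path at each position into an `r`-chain prefix and an `rᶜ`-chain suffix, the signed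
sum over the splits telescopes to `1` for the empty path and to `0` otherwise, so
`C r * S rᶜ = 1`. The falling relation is the complement of the rising one, and the hypothesis
(with acyclicity on the diagonal) says that both have the same `C`; hence their matrices `S` are
inverses of the same matrix and coincide. Boundedness and local finiteness make the vertex set
finite, so these are finite matrices.
-/

open Classical in
theorem List.sum_range_isChain_take_compl_drop {α : Type*} (r : α → α → Prop) (l : List α) :
    ∑ j ∈ Finset.range (l.length + 1),
      (if (l.take j).IsChain r ∧ (l.drop j).IsChain rᶜ then (-1 : ℤ) ^ (l.drop j).length else 0) =
      if l = [] then 1 else 0 := by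
  induction l with
  | nil => simp
  | cons a t ih =>
    rw [Finset.sum_range_succ']
    rcases t with _ | ⟨b, t⟩
    · simp
    -- If `r a b`, the split at `0` vanishes and the others are those of the tail; otherwise only
    -- the splits at `0` and `1` survive, with opposite signs.
    by_cases hab : r a b
    · simpa [List.isChain_cons, List.head?_take, hab] using ih
    · rw [List.length_cons, Finset.sum_range_succ']
      simp [List.isChain_cons, List.head?_take, hab, pow_succ, ite_add_ite]

namespace LDigraph

variable {G : LDigraph}

theorem isPath_append {x y : G.V} {p q : List G.E} :
    G.IsPath x (p ++ q) y ↔ ∃ v, G.IsPath x p v ∧ G.IsPath v q y := by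
  induction p generalizing x with
  | nil => simp [IsPath]
  | cons e p ih => simp [IsPath, ih, and_assoc]

theorem IsPath.right_unique {x y z : G.V} {p : List G.E} (hy : G.IsPath x p y)
    (hz : G.IsPath x p z) : y = z := by
  induction p generalizing x with
  | nil => exact hy.symm.trans hz
  | cons e p ih => exact ih hy.2 hz.2

theorem lt_of_isPath (hac : G.Acyclic) {x y : G.V} {p : List G.E} (h : G.IsPath x p y)
    (hp : p ≠ []) : G.Lt x y :=
  ⟨⟨p, h⟩, by rintro rfl; exact hac x p hp h⟩

theorem finite_of_isBounded (hl : G.LocallyFinite) {bot top : G.V} (hb : G.IsBounded bot top) :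
    Finite G.V := by
  rw [← Set.finite_univ_iff]
  refine ((hl bot top).biUnion fun p _ => p.inits.finite_toSet.biUnion
    fun q _ => Set.Subsingleton.finite (s := {v | G.IsPath bot q v})
      fun _ hv _ hw => IsPath.right_unique hv hw).subset fun v _ => ?_
  obtain ⟨q, hq⟩ := hb.1 v
  obtain ⟨s, hs⟩ := hb.2 v
  simp only [Set.mem_iUnion]
  exact ⟨q ++ s, isPath_append.2 ⟨v, hq, hs⟩, q, (List.mem_inits _ _).2 (List.prefix_append q s), hq⟩

theorem sum_paths_paths_eq_sum_splits {M : Type*} [AddCommMonoid M] [Fintype G.V]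
    (hl : G.LocallyFinite) (x y : G.V) (f : List G.E → List G.E → M) :
    ∑ v, ∑ q ∈ (hl x v).toFinset, ∑ s ∈ (hl v y).toFinset, f q s =
      ∑ p ∈ (hl x y).toFinset, ∑ j ∈ Finset.range (p.length + 1), f (p.take j) (p.drop j) := by
  simp_rw [← Finset.sum_product', Finset.sum_sigma']
  refine Finset.sum_bij (fun z _ => ⟨z.2.1 ++ z.2.2, z.2.1.length⟩) ?_ ?_ ?_ ?_
  · rintro ⟨v, q, s⟩ h
    simp only [Finset.mem_sigma, Finset.mem_product, Set.Finite.mem_toFinset] at h ⊢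
    exact ⟨isPath_append.2 ⟨v, h.2⟩, by simp⟩
  · rintro ⟨v, q, s⟩ h ⟨v', q', s'⟩ h' he
    simp only [Finset.mem_sigma, Finset.mem_product, Set.Finite.mem_toFinset] at h h'
    simp only [Sigma.mk.injEq, heq_eq_eq] at he
    obtain ⟨rfl, rfl⟩ := List.append_inj he.1 he.2
    obtain rfl := h.2.1.right_unique h'.2.1
    rfl
  · rintro ⟨p, j⟩ h
    simp only [Finset.mem_sigma, Finset.mem_range, Set.Finite.mem_toFinset] at h
    obtain ⟨v, hq, hs⟩ := isPath_append.1 ((List.take_append_drop j p).symm ▸ h.1)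
    refine ⟨⟨v, p.take j, p.drop j⟩, ?_, ?_⟩
    · simp [hq, hs]
    · simpa using Nat.le_of_lt_succ h.2
  · rintro ⟨v, q, s⟩ _
    simp

noncomputable def chainCount (G : LDigraph) (r : G.E → G.E → Prop) : Matrix G.V G.V ℤ :=
  Matrix.of fun x y => {p | G.IsPath x p y ∧ p.IsChain r}.ncard

noncomputable def signedChainCount (G : LDigraph) (r : G.E → G.E → Prop) : Matrix G.V G.V ℤ :=
  Matrix.of fun x y => ∑ᶠ (p : List G.E) (_ : G.IsPath x p y ∧ p.IsChain r), (-1 : ℤ) ^ p.length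

theorem setOf_isPath_and_eq_coe_filter (hl : G.LocallyFinite) (x y : G.V) (P : List G.E → Prop)
    [DecidablePred P] :
    {p | G.IsPath x p y ∧ P p} = ↑((hl x y).toFinset.filter P) := by
  ext; simp

open Classical in
theorem chainCount_apply (hl : G.LocallyFinite) (r : G.E → G.E → Prop) (x y : G.V) :
    G.chainCount r x y = ∑ p ∈ (hl x y).toFinset, if p.IsChain r then 1 else 0 := by
  rw [chainCount, Matrix.of_apply, setOf_isPath_and_eq_coe_filter hl, Set.ncard_coe_finset,
    Finset.natCast_card_filter]

open Classical in
theorem signedChainCount_apply (hl : G.LocallyFinite) (r : G.E → G.E → Prop) (x y : G.V) :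
    G.signedChainCount r x y =
      ∑ p ∈ (hl x y).toFinset, if p.IsChain r then (-1 : ℤ) ^ p.length else 0 := by
  rw [signedChainCount, Matrix.of_apply, ← Finset.sum_filter, ← finsum_mem_coe_finset,
    ← setOf_isPath_and_eq_coe_filter hl]
  rfl

theorem chainCount_mul_signedChainCount_compl [Fintype G.V] [DecidableEq G.V]
    (hl : G.LocallyFinite) (r : G.E → G.E → Prop) :
    G.chainCount r * G.signedChainCount rᶜ = 1 := by
  classical
  ext x y
  simp_rw [Matrix.mul_apply, chainCount_apply hl, signedChainCount_apply hl, Finset.sum_mul_sum,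
    ite_zero_mul_ite_zero, one_mul, sum_paths_paths_eq_sum_splits hl,
    List.sum_range_isChain_take_compl_drop, Finset.sum_ite_eq', Set.Finite.mem_toFinset,
    Matrix.one_apply]
  exact if_congr Iff.rfl rfl rfl

theorem signedChainCount_eq_compl_of_chainCount_eq [Fintype G.V] [DecidableEq G.V]
    (hl : G.LocallyFinite) {r : G.E → G.E → Prop} (h : G.chainCount r = G.chainCount rᶜ) :
    G.signedChainCount r = G.signedChainCount rᶜ := by
  have hr := chainCount_mul_signedChainCount_compl hl r
  have hrc := chainCount_mul_signedChainCount_compl hl rᶜ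
  rw [compl_compl, ← h, mul_eq_one_comm] at hrc
  exact left_inv_eq_right_inv hrc hr

theorem chainCount_eq_of_ncard_eq (hac : G.Acyclic) {r s : G.E → G.E → Prop}
    (h : ∀ x y, G.Lt x y →
      {p | G.IsPath x p y ∧ p.IsChain r}.ncard = {p | G.IsPath x p y ∧ p.IsChain s}.ncard) :
    G.chainCount r = G.chainCount s := by
  ext x y
  by_cases hxy : G.Lt x y
  · exact congrArg Nat.cast (h x y hxy)
  · have hnil : ∀ p, G.IsPath x p y → p = [] := fun p hp =>
      by_contra fun hne => hxy (lt_of_isPath hac hp hne)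
    simp only [chainCount, Matrix.of_apply]
    congr 2
    ext p
    constructor <;> rintro ⟨hp, -⟩ <;> exact ⟨hp, hnil p hp ▸ List.IsChain.nil⟩

/-- Corollary 5.4: if in every interval the number of rising paths equals the number
of falling paths, then `Σ_{p rising} (−1)^{ℓ(p)} = Σ_{p falling} (−1)^{ℓ(p)}`, summing
over rising (resp. falling) paths from the source `bot` to the sink `top`. -/
theorem alternating_rising_eq_falling (G : LDigraph) (bot top : G.V)
    (hacyclic : G.Acyclic) (hlocfin : G.LocallyFinite) (hbdd : G.IsBounded bot top)
    (hbal : ∀ x y : G.V, G.Lt x y →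
      {p | G.IsPath x p y ∧ G.Rising p}.ncard =
        {p | G.IsPath x p y ∧ G.Falling p}.ncard) :
    ∑ᶠ (p : List G.E) (_ : G.IsPath bot p top ∧ G.Rising p), (-1 : ℤ) ^ p.length =
      ∑ᶠ (p : List G.E) (_ : G.IsPath bot p top ∧ G.Falling p), (-1 : ℤ) ^ p.length := by
  classical
  have := finite_of_isBounded hlocfin hbdd
  have := Fintype.ofFinite G.V
  have hcount : G.chainCount (fun e f => G.rel (G.lab e) (G.lab f)) =
      G.chainCount (fun e f => G.rel (G.lab e) (G.lab f))ᶜ :=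
    chainCount_eq_of_ncard_eq hacyclic hbal
  exact congrFun (congrFun (signedChainCount_eq_compl_of_chainCount_eq hlocfin hcount) bot) top

end LDigraph
end

section
/- Let G be a labeled acyclic locally finite digraph that is balanced (for every interval and every length, the number of rising paths equals the number of falling paths). With R̃_{x,y}(q) = Σ q^{ℓ(p)} over rising paths from x to y (and R̃_{x,x}=1), for all x ≤ y: Σ_{x ≤ z ≤ y} R̃_{x,z}(q) · R̃_{z,y}(−q) = δ_{x,y}. -/
namespace LDigraph

variable (G : LDigraph)

/-- `R̃_{x,y}(q) = Σ_p q^{ℓ(p)}` over rising paths `p` from `x` to `y`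
(the empty path gives `R̃_{x,x} = 1`). -/
noncomputable def Rpoly (x y : G.V) : Polynomial ℤ :=
  ∑ᶠ (p : List G.E) (_ : G.IsPath x p y ∧ G.Rising p), Polynomial.X ^ p.length

/-- `F̃_{x,y}(q) = Σ_p q^{ℓ(p)}` over falling paths `p` from `x` to `y`
(the empty path gives `F̃_{x,x} = 1`). -/
noncomputable def Fpoly (x y : G.V) : Polynomial ℤ :=
  ∑ᶠ (p : List G.E) (_ : G.IsPath x p y ∧ G.Falling p), Polynomial.X ^ p.length

end LDigraph

/-!
By balance, `R̃_{z,y} = F̃_{z,y}` whenever `z ≤ y` (for `z = y` both are `1`, as the graph is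
acyclic). Expanding `Σ_z R̃_{x,z}(q) F̃_{z,y}(-q)` gives a sum over the paths `p` from `x` to `y`
and the positions `i` at which `p` splits into a rising prefix and a falling suffix, each
contributing `q^i (-q)^(ℓ(p) - i)`. Two such positions of a nonempty path are at most one apart,
and each has a neighbour that is again such a position, so they come in consecutive pairs (or not
at all) whose contributions cancel. Only the empty path survives, and it exists iff `x = y`.
-/

theorem Finset.sum_pow_mul_neg_pow_sub_eq_zero {S : Type*} [CommRing S] (a : S) {n : ℕ}
    {s : Finset ℕ} (hs : ∀ i ∈ s, i ≤ n) (hclose : ∀ i ∈ s, ∀ j ∈ s, j ≤ i + 1)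
    (hpair : ∀ i ∈ s, ∃ j ∈ s, j ≠ i) :
    ∑ i ∈ s, a ^ i * (-a) ^ (n - i) = 0 := by
  rcases s.eq_empty_or_nonempty with rfl | hne
  · exact Finset.sum_empty
  have hmin := s.min'_mem hne
  have hmin_le := s.min'_le
  obtain ⟨j, hj, hjmin⟩ := hpair _ hmin
  have hj_eq : j = s.min' hne + 1 := by
    have := hmin_le j hj
    have := hclose _ hmin j hj
    omega
  subst hj_eq
  have hs_eq : s = {s.min' hne, s.min' hne + 1} := by
    ext k
    simp only [Finset.mem_insert, Finset.mem_singleton]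
    refine ⟨fun hk => ?_, by rintro (rfl | rfl) <;> assumption⟩
    have := hmin_le k hk
    have := hclose _ hmin k hk
    omega
  have hn := hs _ hj
  rw [hs_eq, Finset.sum_pair (by omega),
    show n - s.min' hne = n - (s.min' hne + 1) + 1 by omega]
  ring

namespace List

variable {α : Type*} {R : α → α → Prop} {l : List α} {i j : ℕ}

theorem isChain_take_iff :
    (l.take i).IsChain R ↔ ∀ m (h : m + 1 < l.length), m + 1 < i → R l[m] l[m + 1] := by
  simp only [isChain_iff_getElem, length_take, getElem_take]
  exact ⟨fun h m hm hmi => h m (by omega), fun h m hm => h m (by omega) (by omega)⟩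

theorem isChain_drop_iff :
    (l.drop i).IsChain R ↔ ∀ m (h : m + 1 < l.length), i ≤ m → R l[m] l[m + 1] := by
  simp only [isChain_iff_getElem, length_drop, getElem_drop]
  constructor
  · intro h m hm him
    obtain ⟨k, rfl⟩ := Nat.exists_eq_add_of_le him
    simpa [Nat.add_assoc] using h k (by omega)
  · intro h m hm
    simpa [Nat.add_assoc] using h (i + m) (by omega) (by omega)

open Classical in
noncomputable def chainSplits (R : α → α → Prop) (l : List α) : Finset ℕ :=
  (Finset.range (l.length + 1)).filter
    fun i => (l.take i).IsChain R ∧ (l.drop i).IsChain fun a b => ¬ R a b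

theorem mem_chainSplits :
    i ∈ l.chainSplits R ↔
      i ≤ l.length ∧ (l.take i).IsChain R ∧ (l.drop i).IsChain fun a b => ¬ R a b := by
  simp [chainSplits]

theorem le_add_one_of_mem_chainSplits (hi : i ∈ l.chainSplits R) (hj : j ∈ l.chainSplits R) :
    j ≤ i + 1 := by
  rw [mem_chainSplits, isChain_take_iff, isChain_drop_iff] at hi hj
  by_contra! h
  exact hi.2.2 i (by omega) le_rfl (hj.2.1 i (by omega) (by omega))

theorem exists_ne_mem_chainSplits (hl : l ≠ []) (hi : i ∈ l.chainSplits R) :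
    ∃ j ∈ l.chainSplits R, j ≠ i := by
  have hn : 0 < l.length := length_pos_iff.mpr hl
  simp only [mem_chainSplits, isChain_take_iff, isChain_drop_iff] at hi ⊢
  obtain ⟨hin, hrise, hfall⟩ := hi
  -- The step `l[i-1] → l[i]` straddling the split decides on which side the partner lies.
  by_cases hup : ∃ h : i < l.length, ∀ h0 : 0 < i, R (l[i - 1]'(by omega)) l[i]
  · obtain ⟨hil, hR⟩ := hup
    refine ⟨i + 1, ⟨hil, fun m hm hmi => ?_, fun m hm him => hfall m hm (by omega)⟩, by omega⟩
    rcases Nat.lt_or_ge (m + 1) i with hmi' | hmi'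
    · exact hrise m hm hmi'
    · obtain rfl : m = i - 1 := by omega
      simpa [Nat.sub_add_cancel (by omega : 1 ≤ i)] using hR (by omega)
  · have hi0 : 0 < i := Nat.pos_of_ne_zero fun h0 => hup ⟨by omega, fun h => absurd h (by omega)⟩
    refine ⟨i - 1, ⟨by omega, fun m hm hmi => hrise m hm (by omega), fun m hm him => ?_⟩, by omega⟩
    rcases Nat.lt_or_ge m i with hmi | hmi
    · obtain rfl : m = i - 1 := by omega
      simp only [not_exists, not_forall] at hup
      obtain ⟨h0, hR⟩ := hup (by omega)
      simpa [Nat.sub_add_cancel (by omega : 1 ≤ i)] using hR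
    · exact hfall m hm hmi

theorem sum_chainSplits_pow_mul_neg_pow {S : Type*} [CommRing S] (a : S) (R : α → α → Prop)
    (l : List α) :
    ∑ i ∈ l.chainSplits R, a ^ i * (-a) ^ (l.length - i) = if l = [] then 1 else 0 := by
  rcases eq_or_ne l [] with rfl | hl
  · have : ([] : List α).chainSplits R = {0} := by
      ext i
      simp [mem_chainSplits]
    simp [this]
  · rw [if_neg hl]
    exact Finset.sum_pow_mul_neg_pow_sub_eq_zero a (fun i hi => (mem_chainSplits.mp hi).1)
      (fun i hi j hj => le_add_one_of_mem_chainSplits hi hj)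
      (fun i hi => exists_ne_mem_chainSplits hl hi)

end List

open Polynomial

theorem Polynomial.coeff_finsum_X_pow {R α : Type*} [Semiring R] {P : α → Prop}
    (hP : {a | P a}.Finite) (d : α → ℕ) (k : ℕ) :
    (∑ᶠ (a) (_ : P a), (X : R[X]) ^ d a).coeff k = ({a | P a ∧ d a = k}.ncard : R) := by
  classical
  rw [finsum_cond_eq_sum_of_cond_iff (p := P) _ fun _ => hP.mem_toFinset.symm, finsetSum_coeff]
  simp only [coeff_X_pow, Finset.sum_boole]
  congr
  rw [← Set.ncard_coe_finset]
  congr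
  ext a
  simp [eq_comm]

namespace LDigraph

variable {G : LDigraph} {x y z : G.V} {p q : List G.E}

theorem IsPath.append (hp : G.IsPath x p z) (hq : G.IsPath z q y) : G.IsPath x (p ++ q) y := by
  induction p generalizing x with
  | nil => cases hp; exact hq
  | cons e p ih => exact ⟨hp.1, ih hp.2⟩

theorem isPath_append_iff : G.IsPath x (p ++ q) y ↔ ∃ z, G.IsPath x p z ∧ G.IsPath z q y := by
  refine ⟨fun h => ?_, fun ⟨z, hp, hq⟩ => hp.append hq⟩
  induction p generalizing x with
  | nil => exact ⟨x, rfl, h⟩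
  | cons e p ih =>
    obtain ⟨z, hp, hq⟩ := ih h.2
    exact ⟨z, ⟨h.1, hp⟩, hq⟩

theorem IsPath.right_unique_s19 (h : G.IsPath x p y) (h' : G.IsPath x p z) : y = z := by
  induction p generalizing x with
  | nil => exact h.symm.trans h'
  | cons e p ih => exact ih h.2 h'.2

theorem IsPath.eq_or_mem_map_head (h : G.IsPath x p z) : z = x ∨ z ∈ p.map G.head := by
  induction p generalizing x with
  | nil => exact Or.inl h.symm
  | cons e p ih =>
    rcases ih h.2 with rfl | hz
    · exact Or.inr List.mem_cons_self
    · exact Or.inr (List.mem_cons_of_mem _ hz)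

theorem Acyclic.eq_nil (hG : G.Acyclic) (h : G.IsPath x p x) : p = [] :=
  of_not_not fun hp => hG x p hp h

theorem LocallyFinite.finite_setOf_reaches (hG : G.LocallyFinite) (x y : G.V) :
    {z | G.Reaches x z ∧ G.Reaches z y}.Finite := by
  refine ((hG x y).biUnion fun p _ => ((p.map G.head).finite_toSet.insert x)).subset ?_
  rintro z ⟨⟨p, hp⟩, ⟨q, hq⟩⟩
  refine Set.mem_biUnion (hp.append hq) ?_
  rcases hp.eq_or_mem_map_head with rfl | hz
  · exact Set.mem_insert _ _
  · exact Set.mem_insert_of_mem _ (List.map_append .. ▸ List.mem_append_left _ hz)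

theorem Rpoly_eq_Fpoly (hacyclic : G.Acyclic) (hG : G.LocallyFinite)
    (hbal : ∀ x y : G.V, G.Lt x y → ∀ k : ℕ,
      {p | G.IsPath x p y ∧ G.Rising p ∧ p.length = k}.ncard =
        {p | G.IsPath x p y ∧ G.Falling p ∧ p.length = k}.ncard)
    (hxy : G.Reaches x y) : G.Rpoly x y = G.Fpoly x y := by
  rcases eq_or_ne x y with rfl | hne
  · have hloops : ∀ p, G.IsPath x p x ∧ G.Rising p ↔ G.IsPath x p x ∧ G.Falling p := fun p =>
      and_congr_right fun hp => by
        obtain rfl := hacyclic.eq_nil hp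
        exact ⟨fun _ => List.isChain_nil, fun _ => List.isChain_nil⟩
    simp only [Rpoly, Fpoly, hloops]
  · ext k
    rw [Rpoly, Fpoly, coeff_finsum_X_pow ((hG x y).subset fun _ hp => hp.1),
      coeff_finsum_X_pow ((hG x y).subset fun _ hp => hp.1)]
    simpa only [and_assoc] using congrArg (Nat.cast : ℕ → ℤ) (hbal x y ⟨hxy, hne⟩ k)

open Classical in
theorem sum_rising_falling_eq_sum_chainSplits {M : Type*} [AddCommMonoid M]
    (hG : G.LocallyFinite) (x y : G.V) (f : ℕ → ℕ → M) :
    ∑ z ∈ (hG.finite_setOf_reaches x y).toFinset,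
        ∑ pq ∈ ((hG x z).toFinset.filter G.Rising) ×ˢ ((hG z y).toFinset.filter G.Falling),
          f pq.1.length pq.2.length =
      ∑ p ∈ (hG x y).toFinset,
        ∑ i ∈ p.chainSplits (fun e e' => G.rel (G.lab e) (G.lab e')), f i (p.length - i) := by
  rw [Finset.sum_sigma', Finset.sum_sigma']
  refine Finset.sum_bij (fun σ _ => ⟨σ.2.1 ++ σ.2.2, σ.2.1.length⟩) ?_ ?_ ?_ ?_
  · rintro ⟨z, p, q⟩ h
    simp only [Finset.mem_sigma, Finset.mem_product, Finset.mem_filter,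
      Set.Finite.mem_toFinset, Set.mem_ofPred_eq] at h
    obtain ⟨-, ⟨hp, hrise⟩, hq, hfall⟩ := h
    simp only [Finset.mem_sigma, Set.Finite.mem_toFinset, Set.mem_ofPred_eq,
      List.mem_chainSplits, List.take_left, List.drop_left, List.length_append]
    exact ⟨hp.append hq, by omega, hrise, hfall⟩
  · rintro ⟨z, p, q⟩ h ⟨z', p', q'⟩ h' heq
    simp only [Finset.mem_sigma, Finset.mem_product, Finset.mem_filter,
      Set.Finite.mem_toFinset, Set.mem_ofPred_eq] at h h'
    simp only [Sigma.mk.inj_iff, heq_eq_eq] at heq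
    obtain ⟨rfl, rfl⟩ := List.append_inj heq.1 heq.2
    obtain rfl := h.2.1.1.right_unique_s19 h'.2.1.1
    rfl
  · rintro ⟨p, i⟩ h
    simp only [Finset.mem_sigma, Set.Finite.mem_toFinset, Set.mem_ofPred_eq,
      List.mem_chainSplits] at h
    obtain ⟨hp, hi, hrise, hfall⟩ := h
    obtain ⟨z, hpz, hzq⟩ := isPath_append_iff.mp ((List.take_append_drop i p).symm ▸ hp)
    refine ⟨⟨z, p.take i, p.drop i⟩, ?_, ?_⟩
    · simp only [Finset.mem_sigma, Finset.mem_product, Finset.mem_filter,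
        Set.Finite.mem_toFinset, Set.mem_ofPred_eq]
      exact ⟨⟨⟨_, hpz⟩, ⟨_, hzq⟩⟩, ⟨hpz, hrise⟩, hzq, hfall⟩
    · simp [List.take_append_drop, Nat.min_eq_left hi]
  · rintro ⟨z, p, q⟩ -
    simp

open Classical in
theorem sum_Rpoly_mul_Fpoly_comp_neg (hG : G.LocallyFinite) (x y : G.V) :
    ∑ᶠ (z : G.V) (_ : G.Reaches x z ∧ G.Reaches z y),
        G.Rpoly x z * (G.Fpoly z y).comp (-X) = if x = y then 1 else 0 := by
  have hRpoly z : G.Rpoly x z = ∑ p ∈ (hG x z).toFinset.filter G.Rising, X ^ p.length :=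
    finsum_cond_eq_sum_of_cond_iff _ fun _ => by simp
  have hFpoly z : G.Fpoly z y = ∑ p ∈ (hG z y).toFinset.filter G.Falling, X ^ p.length :=
    finsum_cond_eq_sum_of_cond_iff _ fun _ => by simp
  calc ∑ᶠ (z : G.V) (_ : G.Reaches x z ∧ G.Reaches z y), G.Rpoly x z * (G.Fpoly z y).comp (-X)
      = ∑ z ∈ (hG.finite_setOf_reaches x y).toFinset,
          ∑ pq ∈ ((hG x z).toFinset.filter G.Rising) ×ˢ ((hG z y).toFinset.filter G.Falling),
            (X : ℤ[X]) ^ pq.1.length * (-X) ^ pq.2.length := by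
        rw [finsum_cond_eq_sum_of_cond_iff (p := fun z => G.Reaches x z ∧ G.Reaches z y) _
          fun _ => (hG.finite_setOf_reaches x y).mem_toFinset.symm]
        refine Finset.sum_congr rfl fun z _ => ?_
        simp [hRpoly, hFpoly, Finset.sum_mul_sum, ← Finset.sum_product']
    _ = ∑ p ∈ (hG x y).toFinset, if p = [] then 1 else 0 := by
        rw [sum_rising_falling_eq_sum_chainSplits hG x y fun i j => X ^ i * (-X) ^ j]
        simp only [List.sum_chainSplits_pow_mul_neg_pow]
    _ = if x = y then 1 else 0 := by
        rw [Finset.sum_ite_eq']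
        simp [IsPath]

end LDigraph

open Classical in
theorem R_R_inverse_general (G : LDigraph) (hacyclic : G.Acyclic) (hlocfin : G.LocallyFinite)
    (hbal : ∀ x y : G.V, G.Lt x y → ∀ k : ℕ,
      {p | G.IsPath x p y ∧ G.Rising p ∧ p.length = k}.ncard =
        {p | G.IsPath x p y ∧ G.Falling p ∧ p.length = k}.ncard)
    (x y : G.V) :
    ∑ᶠ (z : G.V) (_ : G.Reaches x z ∧ G.Reaches z y),
        G.Rpoly x z * (G.Rpoly z y).comp (-Polynomial.X) =
      if x = y then 1 else 0 := by
  rw [← LDigraph.sum_Rpoly_mul_Fpoly_comp_neg hlocfin x y]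
  refine finsum_congr fun z => finsum_congr fun hz => ?_
  rw [LDigraph.Rpoly_eq_Fpoly hacyclic hlocfin hbal hz.2]

open Classical in
/-- Corollary 6.7 (first identity): for a balanced labeled acyclic digraph,
`Σ_{x ≤ z ≤ y} R̃_{x,z}(q) · R̃_{z,y}(−q) = δ_{x,y}`. -/
theorem R_R_inverse (G : LDigraph) (hacyclic : G.Acyclic) (hlocfin : G.LocallyFinite)
    (hbal : ∀ x y : G.V, G.Lt x y → ∀ k : ℕ,
      {p | G.IsPath x p y ∧ G.Rising p ∧ p.length = k}.ncard =
        {p | G.IsPath x p y ∧ G.Falling p ∧ p.length = k}.ncard)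
    (x y : G.V) (hxy : G.Reaches x y) :
    ∑ᶠ (z : G.V) (_ : G.Reaches x z ∧ G.Reaches z y),
        G.Rpoly x z * (G.Rpoly z y).comp (-Polynomial.X) =
      if x = y then 1 else 0 :=
  R_R_inverse_general G hacyclic hlocfin hbal x y
end
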